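/- arXiv:2605.09653 — 6 statements merged into one kernel-verified Lean document; each statement's English description precedes it below -/
import Mathlib

section
/- Let P = {p_1,…,p_m} be a finite set in a metric space with optimal 1-median x* and optimal cost OPT = cost(x*,P). Suppose the number of points p ∈ P with cost(p,P) ≤ (2−α)·OPT is at most δ·m, where α ∈ (0,1] and δ ∈ [0, 1−α]. If Q is a uniformly random subset of P of size r ≥ 2, then E_Q[Δ(x*,Q)] ≤ C(r,2)·(α + 2δ)·OPT. -/
/-!
Every pair of distinct points of `P` lies in the same number `C(m-2, r-2)` of the `r`-subsets, so
`E[Δ(x*,Q)] = C(r,2)/C(m,2) · Δ(x*,P)`. Summing the slack over all pairs of `P` gives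
`Δ(x*,P) = m(m-1)·OPT - (m/2)·∑_p cost(p,P)`, and `∑_p cost(p,P)` is large because all but
`δm` points have cost above `(2-α)·OPT` while the others still cost at least `OPT`.
-/

open Finset

namespace Finset

variable {α : Type*} [DecidableEq α]

theorem sum_powersetCard_sum_offDiag {M : Type*} [AddCommMonoid M] (P : Finset α) {r : ℕ}
    (hr : 2 ≤ r) (f : α × α → M) :
    ∑ Q ∈ P.powersetCard r, ∑ pq ∈ Q.offDiag, f pq
      = (#P - 2).choose (r - 2) • ∑ pq ∈ P.offDiag, f pq := by
  rw [sum_comm' (t' := P.offDiag)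
      (s' := fun pq => (P.powersetCard r).filter (({pq.1, pq.2} : Finset α) ⊆ ·))]
  · rw [smul_sum]
    refine sum_congr rfl fun pq hpq => ?_
    obtain ⟨h1, h2, hne⟩ := mem_offDiag.1 hpq
    have hpair : #({pq.1, pq.2} : Finset α) = 2 := card_pair hne
    rw [sum_const, card_filter_powersetCard_subset _ _ _ (by simp [insert_subset_iff, h1, h2])
      (by omega), hpair]
  · intro Q pq
    simp only [mem_powersetCard, mem_offDiag, mem_filter, insert_subset_iff,
      singleton_subset_iff]
    constructor
    · rintro ⟨⟨hQP, hQr⟩, h1, h2, hne⟩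
      exact ⟨⟨⟨hQP, hQr⟩, h1, h2⟩, hQP h1, hQP h2, hne⟩
    · rintro ⟨⟨⟨hQP, hQr⟩, h1, h2⟩, -, -, hne⟩
      exact ⟨⟨hQP, hQr⟩, h1, h2, hne⟩

theorem inv_card_powersetCard_mul_sum_sum_offDiag {K : Type*} [Field K] [CharZero K]
    (P : Finset α) {r : ℕ} (hr : 2 ≤ r) (hrP : r ≤ #P) (f : α × α → K) :
    (#(P.powersetCard r) : K)⁻¹ * ∑ Q ∈ P.powersetCard r, ∑ pq ∈ Q.offDiag, f pq
      = (r.choose 2 : K) / (#P).choose 2 * ∑ pq ∈ P.offDiag, f pq := by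
  have hchoose : ((#P).choose r * r.choose 2 : K) = (#P).choose 2 * (#P - 2).choose (r - 2) := by
    exact_mod_cast Nat.choose_mul hr
  have hr0 : ((#P).choose r : K) ≠ 0 := by exact_mod_cast (Nat.choose_pos hrP).ne'
  have h20 : ((#P).choose 2 : K) ≠ 0 := by exact_mod_cast (Nat.choose_pos (hr.trans hrP)).ne'
  rw [sum_powersetCard_sum_offDiag P hr, card_powersetCard, nsmul_eq_mul]
  rw [div_mul_eq_mul_div, eq_div_iff h20, inv_mul_eq_div, div_mul_eq_mul_div, div_eq_iff hr0]
  linear_combination (∑ pq ∈ P.offDiag, f pq) * hchoose.symm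

theorem card_mul_sub_le_sum_of_card_filter_le {ι R : Type*} [CommRing R] [LinearOrder R]
    [IsStrictOrderedRing R] {s : Finset ι} {f : ι → R} {a b k : R}
    (ha : ∀ i ∈ s, a ≤ f i) (hab : a ≤ b) (hk : (#(s.filter (f · ≤ b)) : R) ≤ k) :
    #s * b - k * (b - a) ≤ ∑ i ∈ s, f i := by
  have hsmall : #(s.filter (f · ≤ b)) * a ≤ ∑ i ∈ s.filter (f · ≤ b), f i := by
    rw [← nsmul_eq_mul]
    exact card_nsmul_le_sum _ _ _ fun i hi => ha i (mem_filter.1 hi).1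
  have hlarge : #(s.filter (¬ f · ≤ b)) * b ≤ ∑ i ∈ s.filter (¬ f · ≤ b), f i := by
    rw [← nsmul_eq_mul]
    exact card_nsmul_le_sum _ _ _ fun i hi => (not_le.1 (mem_filter.1 hi).2).le
  have hcard : (#(s.filter (f · ≤ b)) + #(s.filter (¬ f · ≤ b)) : R) = #s := by
    exact_mod_cast card_filter_add_card_filter_not (s := s) (fun i => f i ≤ b)
  rw [← sum_filter_add_sum_filter_not s (f · ≤ b)]
  linear_combination hsmall + hlarge + mul_le_mul_of_nonneg_right hk (sub_nonneg.2 hab)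
    - b * hcard

theorem sum_offDiag_slack {X : Type*} [PseudoMetricSpace X] [DecidableEq X]
    (P : Finset X) (x : X) :
    ∑ pq ∈ P.offDiag, (dist x pq.1 + dist x pq.2 - dist pq.1 pq.2)
      = 2 * (#P - 1) * ∑ p ∈ P, dist x p - ∑ p ∈ P, ∑ q ∈ P, dist p q := by
  have hsplit := sum_union (disjoint_diag_offDiag (s := P))
    (f := fun pq : X × X => dist x pq.1 + dist x pq.2 - dist pq.1 pq.2)
  rw [diag_union_offDiag, sum_diag, sum_product] at hsplit
  simp only [dist_self, sub_zero, sum_sub_distrib, sum_add_distrib, sum_const,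
    nsmul_eq_mul, ← mul_sum] at hsplit
  rw [sum_sub_distrib, sum_add_distrib]
  linear_combination -hsplit

end Finset

open Classical in
theorem expected_slack_bound_general {X : Type*} [MetricSpace X] [DecidableEq X]
    (P : Finset X) (m : ℕ) (hm : P.card = m)
    (cost : X → ℝ) (hcost : ∀ x, cost x = (m : ℝ)⁻¹ * ∑ p ∈ P, dist x p)
    (xstar : X) (hxstar : ∀ x, cost xstar ≤ cost x)
    (OPT : ℝ) (hOPT : OPT = cost xstar)
    (Δ : Finset X → ℝ)
    (hΔ : ∀ Q, Δ Q = (1 / 2) *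
      ∑ pq ∈ Q.offDiag, (dist xstar pq.1 + dist xstar pq.2 - dist pq.1 pq.2))
    (α δ : ℝ) (hα0 : 0 < α) (hδ0 : 0 ≤ δ) (hδ : δ ≤ 1 - α)
    (hfew : (((P.filter (fun p => cost p ≤ (2 - α) * OPT)).card : ℝ)) ≤ δ * m)
    (r : ℕ) (hr2 : 2 ≤ r) (hrm : r ≤ m) :
    ((P.powersetCard r).card : ℝ)⁻¹ * ∑ Q ∈ P.powersetCard r, Δ Q
      ≤ (r.choose 2 : ℝ) * (α + 2 * δ) * OPT := by
  subst hm
  have hm0 : (0 : ℝ) < #P := by exact_mod_cast (by omega : 0 < #P)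
  have hsum_dist (x : X) : ∑ p ∈ P, dist x p = #P * cost x := by
    rw [hcost]; field_simp
  have hOPT0 : 0 ≤ OPT := by
    rw [hOPT, hcost]; exact mul_nonneg (inv_nonneg.2 hm0.le) (sum_nonneg fun _ _ => dist_nonneg)
  have htotal_cost : #P * ((2 - α) * OPT) - δ * #P * ((2 - α) * OPT - OPT) ≤ ∑ p ∈ P, cost p :=
    card_mul_sub_le_sum_of_card_filter_le (fun p _ => hOPT ▸ hxstar p) (by nlinarith) hfew
  have htotal_slack : 1 / 2 * ∑ pq ∈ P.offDiag, (dist xstar pq.1 + dist xstar pq.2 - dist pq.1 pq.2)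
      ≤ (#P).choose 2 * ((α + 2 * δ) * OPT) := by
    rw [sum_offDiag_slack, Nat.cast_choose_two, hsum_dist xstar, ← hOPT,
      sum_congr rfl fun p _ => hsum_dist p, ← mul_sum]
    -- the remaining gap is `m²δ(1+α)·OPT + m(2-α-2δ)·OPT`
    nlinarith [mul_le_mul_of_nonneg_left htotal_cost hm0.le,
      mul_nonneg (mul_nonneg hm0.le hm0.le) (mul_nonneg hδ0 hOPT0),
      mul_nonneg (mul_nonneg hm0.le hm0.le) (mul_nonneg (mul_nonneg hδ0 hα0.le) hOPT0),
      mul_nonneg hm0.le (mul_nonneg (by linarith : 0 ≤ 2 - α - 2 * δ) hOPT0)]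
  have hchoose : (0 : ℝ) < (#P).choose 2 := by exact_mod_cast Nat.choose_pos (hr2.trans hrm)
  simp only [hΔ, ← mul_sum]
  rw [mul_left_comm, inv_card_powersetCard_mul_sum_sum_offDiag P hr2 hrm]
  calc _ = (r.choose 2 : ℝ) / (#P).choose 2 * (1 / 2 * ∑ pq ∈ P.offDiag,
          (dist xstar pq.1 + dist xstar pq.2 - dist pq.1 pq.2)) := by ring
    _ ≤ (r.choose 2 : ℝ) / (#P).choose 2 * ((#P).choose 2 * ((α + 2 * δ) * OPT)) := by
        gcongr
    _ = (r.choose 2 : ℝ) * (α + 2 * δ) * OPT := by field_simp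

open Classical in
/-- If at most `δ·m` points of `P` have cost at most `(2−α)·OPT`, then a uniformly
random `r`-subset `Q` of `P` satisfies `E[Δ(x*,Q)] ≤ C(r,2)·(α+2δ)·OPT`. -/
theorem expected_slack_bound {X : Type*} [MetricSpace X] [DecidableEq X]
    (P : Finset X) (m : ℕ) (hm : P.card = m) (hm0 : 0 < m)
    (cost : X → ℝ) (hcost : ∀ x, cost x = (m : ℝ)⁻¹ * ∑ p ∈ P, dist x p)
    (xstar : X) (hxstar : ∀ x, cost xstar ≤ cost x)
    (OPT : ℝ) (hOPT : OPT = cost xstar)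
    (Δ : Finset X → ℝ)
    (hΔ : ∀ Q, Δ Q = (1 / 2) *
      ∑ pq ∈ Q.offDiag, (dist xstar pq.1 + dist xstar pq.2 - dist pq.1 pq.2))
    (α δ : ℝ) (hα0 : 0 < α) (hα1 : α ≤ 1) (hδ0 : 0 ≤ δ) (hδ : δ ≤ 1 - α)
    (hfew : (((P.filter (fun p => cost p ≤ (2 - α) * OPT)).card : ℝ)) ≤ δ * m)
    (r : ℕ) (hr2 : 2 ≤ r) (hrm : r ≤ m) :
    ((P.powersetCard r).card : ℝ)⁻¹ * ∑ Q ∈ P.powersetCard r, Δ Q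
      ≤ (r.choose 2 : ℝ) * (α + 2 * δ) * OPT :=
  expected_slack_bound_general P m hm cost hcost xstar hxstar OPT hOPT Δ hΔ α δ hα0 hδ0 hδ hfew r
    hr2 hrm
end

section
/- Let P be a finite set of m points in a metric space with optimal median x* and cost OPT. Suppose at most δm points p satisfy cost(p,P) < (2−α)OPT, and let γm be the number of points p with (1−α)OPT ≤ d(x*,p) ≤ (1+α)OPT. Then γ ≥ 1/2 − (1+α)δ/(2α). -/
/-!
Write `μ` for the mean distance to `x*` (so `μ = OPT`). Points closer to `x*` than `(1 - α) μ`
cost less than `(2 - α) μ` by the triangle inequality, so there are at most `δ m` of them. Points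
beyond `(1 + α) μ` each exceed the mean by more than `α μ`, while points in the ring fall short of
it by at most `α μ` and the near points by at most `μ`; since the deviations from the mean sum to
zero, `α m ≤ (1 + α) · #near + 2 α · #ring`.
-/

theorem Finset.sum_dist_le_card_mul_dist_add_sum_dist {X : Type*} [PseudoMetricSpace X]
    (P : Finset X) (x y : X) :
    ∑ q ∈ P, dist y q ≤ P.card * dist y x + ∑ q ∈ P, dist x q :=
  calc ∑ q ∈ P, dist y q ≤ ∑ q ∈ P, (dist y x + dist x q) :=
        Finset.sum_le_sum fun q _ => dist_triangle y x q
    _ = P.card * dist y x + ∑ q ∈ P, dist x q := by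
        rw [Finset.sum_add_distrib, Finset.sum_const, nsmul_eq_mul]

section MeanRing

variable {ι : Type*} (P : Finset ι) (f : ι → ℝ) {μ α : ℝ}

theorem Finset.mul_card_le_card_below_add_card_ring_of_pos (hf : ∀ p ∈ P, 0 ≤ f p)
    (hμ : ∑ p ∈ P, f p = P.card * μ) (hμ0 : 0 < μ) :
    α * P.card ≤ (1 + α) * (P.filter (fun p => f p < (1 - α) * μ)).card
      + 2 * α * (P.filter (fun p => (1 - α) * μ ≤ f p ∧ f p ≤ (1 + α) * μ)).card := by
  have hpoint : ∀ p ∈ P, α * μ ≤ (if f p < (1 - α) * μ then (1 + α) * μ else 0)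
      + (if (1 - α) * μ ≤ f p ∧ f p ≤ (1 + α) * μ then 2 * α * μ else 0) + (f p - μ) := by
    intro p hp
    have := hf p hp
    split_ifs with hbelow hring hring
    · linarith [hring.1]
    · linarith
    · linarith [hring.1]
    · push Not at hbelow hring
      linarith [hring hbelow]
  have hsum := Finset.sum_le_sum hpoint
  simp only [Finset.sum_add_distrib, Finset.sum_ite, Finset.sum_const_zero, Finset.sum_const,
    nsmul_eq_mul, Finset.sum_sub_distrib, hμ] at hsum
  refine le_of_mul_le_mul_left ?_ hμ0
  linarith

theorem Finset.mul_card_le_card_below_add_card_ring (hf : ∀ p ∈ P, 0 ≤ f p)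
    (hμ : ∑ p ∈ P, f p = P.card * μ) (hμ0 : 0 ≤ μ) (hα : 0 ≤ α) :
    α * P.card ≤ (1 + α) * (P.filter (fun p => f p < (1 - α) * μ)).card
      + 2 * α * (P.filter (fun p => (1 - α) * μ ≤ f p ∧ f p ≤ (1 + α) * μ)).card := by
  rcases hμ0.eq_or_lt with rfl | hμpos
  · have hzero : ∀ p ∈ P, f p = 0 :=
      (Finset.sum_eq_zero_iff_of_nonneg hf).mp (by rw [hμ, mul_zero])
    have hring : P.filter (fun p => (1 - α) * 0 ≤ f p ∧ f p ≤ (1 + α) * 0) = P :=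
      Finset.filter_true_of_mem fun p hp => by simp [hzero p hp]
    rw [hring]
    have : (0 : ℝ) ≤ (1 + α) * (P.filter (fun p => f p < (1 - α) * 0)).card := by positivity
    have : 0 ≤ α * P.card := by positivity
    linarith
  · exact P.mul_card_le_card_below_add_card_ring_of_pos f hf hμ hμpos

end MeanRing

open Classical in
theorem middle_ring_fraction_general {X : Type*} [MetricSpace X]
    (P : Finset X) (m : ℕ) (hm : P.card = m) (hm0 : 0 < m)
    (cost : X → ℝ) (hcost : ∀ x, cost x = (m : ℝ)⁻¹ * ∑ p ∈ P, dist x p)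
    (xstar : X)
    (OPT : ℝ) (hOPT : OPT = cost xstar)
    (α δ : ℝ) (hα : 0 < α)
    (hfew : ((P.filter (fun p => cost p < (2 - α) * OPT)).card : ℝ) ≤ δ * m)
    (γ : ℝ)
    (hγ : γ = ((P.filter (fun p =>
        (1 - α) * OPT ≤ dist xstar p ∧ dist xstar p ≤ (1 + α) * OPT)).card : ℝ) / m) :
    1 / 2 - (1 + α) * δ / (2 * α) ≤ γ := by
  have hmR : (0 : ℝ) < m := by exact_mod_cast hm0
  have hsum : ∑ p ∈ P, dist xstar p = P.card * OPT := by
    rw [hOPT, hcost, hm]; field_simp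
  have hOPT0 : 0 ≤ OPT := by rw [hOPT, hcost]; positivity
  have hcheap : ∀ p, cost p ≤ dist p xstar + OPT := fun p => calc
    cost p ≤ (m : ℝ)⁻¹ * (P.card * dist p xstar + ∑ q ∈ P, dist xstar q) := by
      rw [hcost]; gcongr; exact P.sum_dist_le_card_mul_dist_add_sum_dist xstar p
    _ = dist p xstar + OPT := by rw [hOPT, hcost, hm, mul_add, inv_mul_cancel_left₀ hmR.ne']
  have hnear_sub : P.filter (fun p => dist xstar p < (1 - α) * OPT)
      ⊆ P.filter (fun p => cost p < (2 - α) * OPT) := fun p hp => by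
    rw [Finset.mem_filter] at hp ⊢
    exact ⟨hp.1, by linarith [hcheap p, dist_comm p xstar, hp.2]⟩
  have hnear : ((P.filter (fun p => dist xstar p < (1 - α) * OPT)).card : ℝ) ≤ δ * m :=
    le_trans (by exact_mod_cast Finset.card_le_card hnear_sub) hfew
  have hcount := P.mul_card_le_card_below_add_card_ring (fun p => dist xstar p)
    (fun p _ => dist_nonneg) hsum hOPT0 hα.le
  rw [hm] at hcount
  rw [hγ, le_div_iff₀ hmR, show (1 / 2 - (1 + α) * δ / (2 * α)) * m
    = (α * m - (1 + α) * (δ * m)) / (2 * α) by field_simp, div_le_iff₀ (by positivity)]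
  linarith [mul_le_mul_of_nonneg_left hnear (by linarith : 0 ≤ 1 + α)]

open Classical in
/-- If at most `δm` points `p` satisfy `cost(p,P) < (2−α)OPT` and `γm` is the
number of points with `(1−α)OPT ≤ d(x*,p) ≤ (1+α)OPT`,
then `γ ≥ 1/2 − (1+α)δ/(2α)`. -/
theorem middle_ring_fraction {X : Type*} [MetricSpace X]
    (P : Finset X) (m : ℕ) (hm : P.card = m) (hm0 : 0 < m)
    (cost : X → ℝ) (hcost : ∀ x, cost x = (m : ℝ)⁻¹ * ∑ p ∈ P, dist x p)
    (xstar : X) (hxstar : ∀ x, cost xstar ≤ cost x)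
    (OPT : ℝ) (hOPT : OPT = cost xstar)
    (α δ : ℝ) (hα : 0 < α) (hδ : 0 ≤ δ)
    (hfew : ((P.filter (fun p => cost p < (2 - α) * OPT)).card : ℝ) ≤ δ * m)
    (γ : ℝ)
    (hγ : γ = ((P.filter (fun p =>
        (1 - α) * OPT ≤ dist xstar p ∧ dist xstar p ≤ (1 + α) * OPT)).card : ℝ) / m) :
    1 / 2 - (1 + α) * δ / (2 * α) ≤ γ :=
  middle_ring_fraction_general P m hm hm0 cost hcost xstar OPT hOPT α δ hα hfew γ hγ
end

section
/- Let π_1, π_2, π_3 be three permutations of [n] and let y be the consensus permutation built by: (a) setting y(k) = e whenever some element e appears at position k in at least two of the π_i (majority position), and (b) assigning the remaining elements arbitrarily (bijectively) to the remaining positions. Then for any weight function w and for ANY permutation x, d^w_H(x, y) ≤ Δ(x, Q), where Q = {π_1, π_2, π_3} and Δ is the total slack. -/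
open Classical in
/-- Element-weighted Hamming distance between permutations. -/
noncomputable def hamW {n : ℕ} (w : Fin n → ℝ) (p q : Equiv.Perm (Fin n)) : ℝ :=
  ∑ k : Fin n, if p k ≠ q k then (w (p k) + w (q k)) / 2 else 0

open Classical in
lemma hamW_half {n : ℕ} (w : Fin n → ℝ) (p q : Equiv.Perm (Fin n)) :
    (∑ k : Fin n, if p k ≠ q k then w (p k) / 2 else 0)
      = ∑ e : Fin n, if p.symm e ≠ q.symm e then w e / 2 else 0 := by
  rw [← Equiv.sum_comp p.symm (fun k => if p k ≠ q k then w (p k) / 2 else 0)]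
  refine Finset.sum_congr rfl fun e _ => ?_
  simp only [Equiv.apply_symm_apply]
  congr 1
  refine propext (not_congr ⟨fun h => ?_, fun h => ?_⟩)
  · exact (Equiv.eq_symm_apply q).mpr h.symm
  · rw [h, Equiv.apply_symm_apply]

open Classical in
lemma hamW_eq {n : ℕ} (w : Fin n → ℝ) (p q : Equiv.Perm (Fin n)) :
    hamW w p q = ∑ e : Fin n, if p.symm e ≠ q.symm e then w e else 0 := by
  have h1 := hamW_half w p q
  have h2 := hamW_half w q p
  have h3 : (∑ k : Fin n, if q k ≠ p k then w (q k) / 2 else 0)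
      = ∑ k : Fin n, if p k ≠ q k then w (q k) / 2 else 0 := by
    refine Finset.sum_congr rfl fun k _ => ?_
    simp [ne_comm]
  have h4 : (∑ e : Fin n, if q.symm e ≠ p.symm e then w e / 2 else 0)
      = ∑ e : Fin n, if p.symm e ≠ q.symm e then w e / 2 else 0 := by
    refine Finset.sum_congr rfl fun e _ => ?_
    simp [ne_comm]
  have h5 : hamW w p q = (∑ k : Fin n, if p k ≠ q k then w (p k) / 2 else 0)
      + (∑ k : Fin n, if p k ≠ q k then w (q k) / 2 else 0) := by
    rw [← Finset.sum_add_distrib]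
    refine Finset.sum_congr rfl fun k _ => ?_
    split_ifs <;> ring
  rw [h5, h1, ← h3, h2, h4, ← Finset.sum_add_distrib]
  refine Finset.sum_congr rfl fun e _ => ?_
  split_ifs <;> ring

open Classical in
lemma key_ineq {α : Type*} (we : ℝ) (hwe : 0 ≤ we) (A B P1 P2 P3 : α)
    (h12 : P1 = P2 → B = P1) (h13 : P1 = P3 → B = P1) (h23 : P2 = P3 → B = P2) :
    (if A ≠ B then we else 0) ≤
      ((if A ≠ P1 then we else 0) + (if A ≠ P2 then we else 0)
        - (if P1 ≠ P2 then we else 0))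
      + ((if A ≠ P1 then we else 0) + (if A ≠ P3 then we else 0)
        - (if P1 ≠ P3 then we else 0))
      + ((if A ≠ P2 then we else 0) + (if A ≠ P3 then we else 0)
        - (if P2 ≠ P3 then we else 0)) := by
  split_ifs <;> first | linarith | simp_all

/-- For the majority-based consensus `y` of `Q = {π₁,π₂,π₃}` (any permutation
agreeing with the majority element at every position having one), and ANY
permutation `x`, we have `d^w_H(x,y) ≤ Δ(x,Q)`. -/
theorem hamming_consensus_bound {n : ℕ} (w : Fin n → ℝ) (hw : ∀ e, 0 ≤ w e)
    (π₁ π₂ π₃ y : Equiv.Perm (Fin n))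
    (hmaj : ∀ k e, ((π₁ k = e ∧ π₂ k = e) ∨ (π₁ k = e ∧ π₃ k = e) ∨
      (π₂ k = e ∧ π₃ k = e)) → y k = e)
    (x : Equiv.Perm (Fin n)) :
    hamW w x y ≤
      (hamW w x π₁ + hamW w x π₂ - hamW w π₁ π₂)
      + (hamW w x π₁ + hamW w x π₃ - hamW w π₁ π₃)
      + (hamW w x π₂ + hamW w x π₃ - hamW w π₂ π₃) := by
  classical
  simp only [hamW_eq]
  simp only [← Finset.sum_sub_distrib, ← Finset.sum_add_distrib]
  refine Finset.sum_le_sum fun e _ => ?_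
  have h12 : π₁.symm e = π₂.symm e → y.symm e = π₁.symm e := by
    intro h
    have := hmaj (π₁.symm e) e (Or.inl ⟨Equiv.apply_symm_apply _ _,
      by rw [h, Equiv.apply_symm_apply]⟩)
    rw [Equiv.symm_apply_eq]; exact this.symm
  have h13 : π₁.symm e = π₃.symm e → y.symm e = π₁.symm e := by
    intro h
    have := hmaj (π₁.symm e) e (Or.inr (Or.inl ⟨Equiv.apply_symm_apply _ _,
      by rw [h, Equiv.apply_symm_apply]⟩))
    rw [Equiv.symm_apply_eq]; exact this.symm
  have h23 : π₂.symm e = π₃.symm e → y.symm e = π₂.symm e := by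
    intro h
    have := hmaj (π₂.symm e) e (Or.inr (Or.inr ⟨Equiv.apply_symm_apply _ _,
      by rw [h, Equiv.apply_symm_apply]⟩))
    rw [Equiv.symm_apply_eq]; exact this.symm
  have hwe := hw e
  split_ifs <;> first | linarith | simp_all
end

section
/- Let π_1, π_2, π_3 be permutations of [n] viewed as integer sequences, and let z be the pointwise median, z(k) = median(π_1(k), π_2(k), π_3(k)). Then for every permutation x of [n], the Spearman's footrule distance satisfies d_F(x, z) := Σ_k |x(k) − z(k)| ≤ (1/2)·Σ_{1≤i<j≤3} (d_F(x,π_i) + d_F(x,π_j) − d_F(π_i,π_j)). -/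
/-- Median of three integers. -/
def med3 (a b c : ℤ) : ℤ := max (min a b) (min (max a b) c)

/-- Spearman's footrule distance between integer sequences. -/
noncomputable def dF {n : ℕ} (p q : Fin n → ℤ) : ℝ :=
  ∑ k : Fin n, |((p k : ℝ)) - ((q k : ℝ))|

set_option maxHeartbeats 1000000 in
lemma footrule_key (a b c x : ℝ) :
    |x - max (min a b) (min (max a b) c)| ≤
    (|x-a| + |x-b| + |x-c|) - (1/2)*(|a-b| + |a-c| + |b-c|) := by
  have hab : |a-b| ≤ |x-a| + |x-b| := by
    have := abs_sub_le a x b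
    rw [abs_sub_comm a x] at this; linarith
  have hac : |a-c| ≤ |x-a| + |x-c| := by
    have := abs_sub_le a x c
    rw [abs_sub_comm a x] at this; linarith
  have hbc : |b-c| ≤ |x-b| + |x-c| := by
    have := abs_sub_le b x c
    rw [abs_sub_comm b x] at this; linarith
  rcases le_total a b with h1 | h1 <;> rcases le_total a c with h2 | h2 <;>
    rcases le_total b c with h3 | h3 <;>
    simp only [min_def, max_def, h1, h2, h3, ite_true, ite_false] <;>
    (try split_ifs) <;>
    rcases abs_cases (a-b) with ⟨e1,f1⟩|⟨e1,f1⟩ <;>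
    rcases abs_cases (a-c) with ⟨e2,f2⟩|⟨e2,f2⟩ <;>
    rcases abs_cases (b-c) with ⟨e3,f3⟩|⟨e3,f3⟩ <;>
    linarith [hab, hac, hbc]

/-- For the pointwise median `z` of three permutations and any permutation `x`,
`d_F(x,z) ≤ (1/2)·Σ_{i<j}(d_F(x,π_i)+d_F(x,π_j)−d_F(π_i,π_j))`. -/
theorem footrule_median_bound {n : ℕ} (π₁ π₂ π₃ x : Equiv.Perm (Fin n)) :
    let val : Equiv.Perm (Fin n) → Fin n → ℤ := fun p k => ((p k : ℕ) : ℤ)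
    let z : Fin n → ℤ := fun k => med3 (val π₁ k) (val π₂ k) (val π₃ k)
    dF (val x) z ≤ (1 / 2) *
      ((dF (val x) (val π₁) + dF (val x) (val π₂) - dF (val π₁) (val π₂))
      + (dF (val x) (val π₁) + dF (val x) (val π₃) - dF (val π₁) (val π₃))
      + (dF (val x) (val π₂) + dF (val x) (val π₃) - dF (val π₂) (val π₃))) := by
  intro val z
  have hle : dF (val x) z ≤ ∑ k : Fin n,
      ((|((val x k : ℝ)) - (val π₁ k : ℝ)| + |((val x k : ℝ)) - (val π₂ k : ℝ)|
        + |((val x k : ℝ)) - (val π₃ k : ℝ)|)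
       - (1/2) * (|((val π₁ k : ℝ)) - (val π₂ k : ℝ)| + |((val π₁ k : ℝ)) - (val π₃ k : ℝ)|
          + |((val π₂ k : ℝ)) - (val π₃ k : ℝ)|)) := by
    refine Finset.sum_le_sum fun k _ => ?_
    have h := footrule_key ((val π₁ k : ℝ)) ((val π₂ k : ℝ)) ((val π₃ k : ℝ)) ((val x k : ℝ))
    have hz : ((z k : ℤ) : ℝ) =
        max (min (val π₁ k : ℝ) (val π₂ k : ℝ))
          (min (max (val π₁ k : ℝ) (val π₂ k : ℝ)) (val π₃ k : ℝ)) := by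
      simp [z, med3]
    rw [hz]; exact h
  refine hle.trans (le_of_eq ?_)
  simp only [dF, Finset.sum_sub_distrib, Finset.sum_add_distrib, ← Finset.mul_sum]
  ring
end

section
/- Let π_1, …, π_5 be permutations of [n]. For a permutation x, let B_x be the set of elements that are unaligned (not part of the fixed longest common subsequence) between x and at least two of the π_i. Then for any weight function w and any two permutations x, y, the weighted Ulam distance satisfies d^w_U(x, y) ≤ ‖B_x‖_w + ‖B_y‖_w, where ‖S‖_w = Σ_{e∈S} w(e). Key combinatorial fact: the elements lying in neither B_x nor B_y form a common subsequence of x and y (they appear in the same relative order in both). -/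
/-- `S` indexes a common subsequence of permutations `x` and `y`: its elements
appear in the same relative order in both. -/
def IsCommon {n : ℕ} (x y : Equiv.Perm (Fin n)) (S : Finset (Fin n)) : Prop :=
  ∀ a ∈ S, ∀ b ∈ S, (x.symm a < x.symm b ↔ y.symm a < y.symm b)

/-- Element-weighted Ulam distance: minimum total weight of elements deleted
from both permutations so that the remaining sequences are equal. -/
noncomputable def ulamW {n : ℕ} (w : Fin n → ℝ) (x y : Equiv.Perm (Fin n)) : ℝ :=
  sInf {c : ℝ | ∃ S : Finset (Fin n), IsCommon x y S ∧ c = ∑ e ∈ Finset.univ \ S, w e}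

open Classical

private lemma atMostOne {P : Fin 5 → Prop} [DecidablePred P] (h : ¬∃ i j : Fin 5, i < j ∧ P i ∧ P j) :
    (Finset.univ.filter P).card ≤ 1 := by
  rw [Finset.card_le_one]
  intro i hi j hj
  simp only [Finset.mem_filter] at hi hj
  by_contra hne
  rcases lt_or_gt_of_ne hne with h' | h'
  · exact h ⟨i, j, h', hi.2, hj.2⟩
  · exact h ⟨j, i, h', hj.2, hi.2⟩

open Classical in
/-- With fixed optimal alignments `A i` between `x` and `π i` (and `A' i` for `y`),
letting `B_x` be the elements unaligned for at least two indices,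
`d^w_U(x,y) ≤ ‖B_x‖_w + ‖B_y‖_w`. -/
theorem ulam_dist_le_bad_weights {n : ℕ} (w : Fin n → ℝ) (hw : ∀ e, 0 ≤ w e)
    (π : Fin 5 → Equiv.Perm (Fin n)) (x y : Equiv.Perm (Fin n))
    (A A' : Fin 5 → Finset (Fin n))
    (hA : ∀ i, IsCommon x (π i) (A i))
    (hAopt : ∀ i, ∑ e ∈ Finset.univ \ A i, w e = ulamW w x (π i))
    (hA' : ∀ i, IsCommon y (π i) (A' i))
    (hA'opt : ∀ i, ∑ e ∈ Finset.univ \ A' i, w e = ulamW w y (π i)) :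
    ulamW w x y ≤
      (∑ e ∈ Finset.univ.filter
          (fun e => ∃ i j : Fin 5, i < j ∧ e ∉ A i ∧ e ∉ A j), w e)
      + (∑ e ∈ Finset.univ.filter
          (fun e => ∃ i j : Fin 5, i < j ∧ e ∉ A' i ∧ e ∉ A' j), w e) := by
  classical
  set Bx := Finset.univ.filter (fun e => ∃ i j : Fin 5, i < j ∧ e ∉ A i ∧ e ∉ A j) with hBx
  set By := Finset.univ.filter (fun e => ∃ i j : Fin 5, i < j ∧ e ∉ A' i ∧ e ∉ A' j) with hBy
  set S : Finset (Fin n) := Finset.univ \ (Bx ∪ By) with hS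
  have hmemBx : ∀ a : Fin n, a ∉ Bx → ¬∃ i j : Fin 5, i < j ∧ a ∉ A i ∧ a ∉ A j := by
    intro a ha h; exact ha (Finset.mem_filter.2 ⟨Finset.mem_univ a, h⟩)
  have hmemBy : ∀ a : Fin n, a ∉ By → ¬∃ i j : Fin 5, i < j ∧ a ∉ A' i ∧ a ∉ A' j := by
    intro a ha h; exact ha (Finset.mem_filter.2 ⟨Finset.mem_univ a, h⟩)
  have hcommon : IsCommon x y S := by
    intro a ha b hb
    simp only [hS, Finset.mem_sdiff, Finset.mem_union, not_or] at ha hb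
    have key : ∃ i : Fin 5, a ∈ A i ∧ b ∈ A i ∧ a ∈ A' i ∧ b ∈ A' i := by
      set T : Finset (Fin 5) :=
        (Finset.univ.filter (fun i => a ∉ A i)) ∪ (Finset.univ.filter (fun i => b ∉ A i)) ∪
        (Finset.univ.filter (fun i => a ∉ A' i)) ∪ (Finset.univ.filter (fun i => b ∉ A' i)) with hT
      have hcard : T.card ≤ 4 := by
        calc T.card ≤ _ := Finset.card_union_le _ _
          _ ≤ _ + _ := add_le_add (Finset.card_union_le _ _) le_rfl
          _ ≤ (_ + _) + _ := add_le_add (add_le_add (Finset.card_union_le _ _) le_rfl) le_rfl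
          _ ≤ 1 + 1 + 1 + 1 := by
              refine add_le_add (add_le_add (add_le_add ?_ ?_) ?_) ?_
              · exact atMostOne (hmemBx a ha.2.1)
              · exact atMostOne (hmemBx b hb.2.1)
              · exact atMostOne (hmemBy a ha.2.2)
              · exact atMostOne (hmemBy b hb.2.2)
          _ = 4 := by norm_num
      have hex : ∃ i : Fin 5, i ∉ T := by
        by_contra h
        push_neg at h
        have h5 : (Finset.univ : Finset (Fin 5)).card ≤ T.card :=
          Finset.card_le_card fun i _ => h i
        rw [Finset.card_univ] at h5
        simp at h5
        omega
      obtain ⟨i, hi⟩ := hex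
      simp only [hT, Finset.mem_union, Finset.mem_filter, Finset.mem_univ, true_and,
        not_or, not_not] at hi
      exact ⟨i, hi.1.1.1, hi.1.1.2, hi.1.2, hi.2⟩
    obtain ⟨i, h1, h2, h3, h4⟩ := key
    rw [hA i a h1 b h2, ← hA' i a h3 b h4]
  have hstep : ulamW w x y ≤ ∑ e ∈ Finset.univ \ S, w e := by
    apply csInf_le
    · refine ⟨0, ?_⟩
      rintro c ⟨T, _, rfl⟩
      exact Finset.sum_nonneg fun e _ => hw e
    · exact ⟨S, hcommon, rfl⟩
  have hsd : Finset.univ \ S = Bx ∪ By := by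
    rw [hS, Finset.sdiff_sdiff_self_left, Finset.univ_inter]
  calc ulamW w x y ≤ ∑ e ∈ Finset.univ \ S, w e := hstep
    _ = ∑ e ∈ Bx ∪ By, w e := by rw [hsd]
    _ ≤ ∑ e ∈ Bx, w e + ∑ e ∈ By, w e := by
        have := Finset.sum_union_inter (s₁ := Bx) (s₂ := By) (f := w)
        have h0 : 0 ≤ ∑ e ∈ Bx ∩ By, w e := Finset.sum_nonneg fun e _ => hw e
        linarith
end

section
/- Let π_1,…,π_5 be permutations and for a permutation x let I_i^x be the set of elements unaligned between x and π_i under a fixed optimal alignment, so that ‖I_i^x‖_w = d^w_U(x,π_i). Then ‖I_i^x ∩ I_j^x‖_w ≤ d^w_U(x,π_i) + d^w_U(x,π_j) − d^w_U(π_i,π_j), and consequently ‖B_x‖_w ≤ Δ(x,{π_1,…,π_5}) where B_x = ∪_{i<j}(I_i^x ∩ I_j^x) and Δ is the total slack under d^w_U. -/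
namespace IsCommon

variable {n : ℕ} {x y z : Equiv.Perm (Fin n)} {S T : Finset (Fin n)}

theorem symm (h : IsCommon x y S) : IsCommon y x S :=
  fun a ha b hb => (h a ha b hb).symm

theorem mono (h : IsCommon x y T) (hST : S ⊆ T) : IsCommon x y S :=
  fun a ha b hb => h a (hST ha) b (hST hb)

theorem trans (hxy : IsCommon x y S) (hyz : IsCommon y z S) : IsCommon x z S :=
  fun a ha b hb => (hxy a ha b hb).trans (hyz a ha b hb)

end IsCommon

section UlamW

variable {n : ℕ} {w : Fin n → ℝ}

theorem ulamW_le_sum_sdiff (hw : ∀ e, 0 ≤ w e) {x y : Equiv.Perm (Fin n)} {S : Finset (Fin n)}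
    (hS : IsCommon x y S) : ulamW w x y ≤ ∑ e ∈ Finset.univ \ S, w e := by
  refine csInf_le ⟨0, ?_⟩ ⟨S, hS, rfl⟩
  rintro c ⟨T, -, rfl⟩
  exact Finset.sum_nonneg fun e _ => hw e

theorem sum_sdiff_inter_sdiff_le (hw : ∀ e, 0 ≤ w e) {x y z : Equiv.Perm (Fin n)}
    {S T : Finset (Fin n)} (hS : IsCommon x y S) (hT : IsCommon x z T) :
    ∑ e ∈ (Finset.univ \ S) ∩ (Finset.univ \ T), w e
      ≤ ∑ e ∈ Finset.univ \ S, w e + ∑ e ∈ Finset.univ \ T, w e - ulamW w y z := by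
  have hcommon : IsCommon y z (S ∩ T) :=
    (hS.symm.mono Finset.inter_subset_left).trans (hT.mono Finset.inter_subset_right)
  have hunion := Finset.sum_union_inter (s₁ := Finset.univ \ S) (s₂ := Finset.univ \ T) (f := w)
  rw [← Finset.sdiff_inter_distrib_right] at hunion
  linarith [ulamW_le_sum_sdiff hw hcommon]

end UlamW

theorem Finset.sum_biUnion_le_sum_sum {ι α : Type*} [DecidableEq α] {w : α → ℝ}
    (hw : ∀ a, 0 ≤ w a) (s : Finset ι) (t : ι → Finset α) :
    ∑ a ∈ s.biUnion t, w a ≤ ∑ i ∈ s, ∑ a ∈ t i, w a := by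
  rw [← Finset.sup_eq_biUnion]
  refine s.apply_sup_le_sum (f := fun u => ∑ a ∈ u, w a) Finset.sum_empty fun {u v} => ?_
  have hinter : 0 ≤ ∑ a ∈ u ∩ v, w a := Finset.sum_nonneg fun a _ => hw a
  rw [Finset.sup_eq_union]
  linarith [Finset.sum_union_inter (s₁ := u) (s₂ := v) (f := w)]

theorem Finset.sum_filter_mem_two_le {ι α : Type*} [Fintype ι] [LinearOrder ι] [Fintype α]
    [DecidableEq α] {w : α → ℝ} (hw : ∀ a, 0 ≤ w a) (s : ι → Finset α)
    [DecidablePred fun a => ∃ i j, i < j ∧ a ∈ s i ∧ a ∈ s j] :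
    ∑ a ∈ Finset.univ.filter (fun a => ∃ i j, i < j ∧ a ∈ s i ∧ a ∈ s j), w a
      ≤ ∑ i, ∑ j, if i < j then ∑ a ∈ s i ∩ s j, w a else 0 := by
  set P : Finset (ι × ι) := Finset.univ.filter fun p => p.1 < p.2
  have hsub : Finset.univ.filter (fun a => ∃ i j, i < j ∧ a ∈ s i ∧ a ∈ s j)
      ⊆ P.biUnion fun p => s p.1 ∩ s p.2 := by
    rintro a ha
    obtain ⟨i, j, hij, hi, hj⟩ := (Finset.mem_filter.mp ha).2
    exact Finset.mem_biUnion.mpr ⟨(i, j), by simpa [P] using hij, Finset.mem_inter.mpr ⟨hi, hj⟩⟩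
  calc _ ≤ ∑ a ∈ P.biUnion fun p => s p.1 ∩ s p.2, w a :=
        Finset.sum_le_sum_of_subset_of_nonneg hsub fun a _ _ => hw a
    _ ≤ ∑ p ∈ P, ∑ a ∈ s p.1 ∩ s p.2, w a := Finset.sum_biUnion_le_sum_sum hw P _
    _ = _ := by rw [Finset.sum_filter, ← Finset.sum_product', Finset.univ_product_univ]

open Classical in
/-- With `I_i = univ \ A i` the unaligned elements between `x` and `π i`,
`‖I_i ∩ I_j‖ ≤ d(x,π_i)+d(x,π_j)−d(π_i,π_j)`, and consequently
`‖B_x‖ ≤ Δ(x,{π_1,…,π_5})` under the weighted Ulam distance. -/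
theorem ulam_bad_le_slack {n : ℕ} (w : Fin n → ℝ) (hw : ∀ e, 0 ≤ w e)
    (π : Fin 5 → Equiv.Perm (Fin n)) (x : Equiv.Perm (Fin n))
    (A : Fin 5 → Finset (Fin n))
    (hA : ∀ i, IsCommon x (π i) (A i))
    (hAopt : ∀ i, ∑ e ∈ Finset.univ \ A i, w e = ulamW w x (π i)) :
    (∀ i j : Fin 5, i ≠ j →
      ∑ e ∈ (Finset.univ \ A i) ∩ (Finset.univ \ A j), w e
        ≤ ulamW w x (π i) + ulamW w x (π j) - ulamW w (π i) (π j)) ∧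
    (∑ e ∈ Finset.univ.filter
        (fun e => ∃ i j : Fin 5, i < j ∧ e ∉ A i ∧ e ∉ A j), w e
      ≤ ∑ i : Fin 5, ∑ j : Fin 5,
          if i < j then ulamW w x (π i) + ulamW w x (π j) - ulamW w (π i) (π j)
          else 0) := by
  have hpair : ∀ i j, ∑ e ∈ (Finset.univ \ A i) ∩ (Finset.univ \ A j), w e
      ≤ ulamW w x (π i) + ulamW w x (π j) - ulamW w (π i) (π j) := fun i j => by
    simpa only [hAopt] using sum_sdiff_inter_sdiff_le hw (hA i) (hA j)
  refine ⟨fun i j _ => hpair i j, ?_⟩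
  calc _ ≤ ∑ i : Fin 5, ∑ j : Fin 5,
          if i < j then ∑ e ∈ (Finset.univ \ A i) ∩ (Finset.univ \ A j), w e else 0 := by
        simpa only [Finset.mem_sdiff, Finset.mem_univ, true_and] using
          Finset.sum_filter_mem_two_le hw fun i => Finset.univ \ A i
    _ ≤ _ := by
        gcongr with i _ j _
        split_ifs
        exacts [hpair i j, le_rfl]
end
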